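/- Let (G,P,N) be a connected partitioned probe P5-free graph. If G is 3-colourable, then at most one connected component of G[P] is non-bipartite. -/

import Mathlib

/-!
Let `G'` be a `P₅`-free graph obtained from `G` by adding edges inside `N`, so `G'` and `G` have
the same edges at every probe. Suppose `K₁ ≠ K₂` are non-bipartite components of `G[P]`, and take a
shortest `G'`-path `u = p₀, p₁, …, p_d = v` between them; `d ≥ 2` since distinct components are
neither equal nor adjacent. The neighbourhood of a vertex of a 3-colourable graph is bipartite, so
`p₁` misses some vertex of `K₁`, and connectivity of `K₁` yields an edge `yx` of `K₁` with
`p₁x ∈ G'`, `p₁y ∉ G'`. If `d ≥ 3`, then `y x p₁ p₂ p₃` is an induced `P₅` of `G'`; if `d = 2`,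
the same argument in `K₂` gives `x'y'` and `y x p₁ x' y'` is an induced `P₅`.
-/

open SimpleGraph

/-- `H` does not occur as an induced subgraph of `G`. -/
def IndFree {W V : Type*} (H : SimpleGraph W) (G : SimpleGraph V) : Prop :=
  IsEmpty (H ↪g G)

/-- `(G, Nᶜ, N)` is a partitioned probe `H`-free graph. -/
def PartProbeFree {W V : Type*} (H : SimpleGraph W) (G : SimpleGraph V) (N : Set V) : Prop :=
  (∀ u ∈ N, ∀ v ∈ N, ¬ G.Adj u v) ∧
  ∃ G' : SimpleGraph V, G ≤ G' ∧
    (∀ u v, G'.Adj u v → ¬ G.Adj u v → u ∈ N ∧ v ∈ N) ∧ IndFree H G'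

/-- `K` is the vertex set of a connected component of the subgraph of `G` induced by `P`. -/
def IsCompOf {V : Type*} (G : SimpleGraph V) (P K : Set V) : Prop :=
  K ⊆ P ∧ (G.induce K).Connected ∧ ∀ u ∈ K, ∀ w ∈ P, G.Adj u w → w ∈ K

namespace SimpleGraph

variable {V : Type*} {G : SimpleGraph V}

theorem Colorable.induce_of_subset_neighborSet {n : ℕ} (hG : G.Colorable (n + 1)) {v : V}
    {K : Set V} (hK : K ⊆ G.neighborSet v) : (G.induce K).Colorable n := by
  obtain ⟨c⟩ := hG
  let c' : (G.induce K).Coloring {k // k ≠ c v} :=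
    Coloring.mk (fun u => ⟨c u, (c.valid (hK u.2)).symm⟩) fun h => by simpa using c.valid h
  simpa using c'.colorable

theorem exists_adj_adj_not_adj_of_not_colorable {n : ℕ} (hG : G.Colorable (n + 1)) {K : Set V}
    (hK : (G.induce K).Preconnected) (hKn : ¬ (G.induce K).Colorable n) {q a : V} (ha : a ∈ K)
    (hqa : G.Adj q a) : ∃ x ∈ K, ∃ y ∈ K, G.Adj x y ∧ G.Adj q x ∧ ¬ G.Adj q y := by
  obtain ⟨z, hz, hqz⟩ : ∃ z ∈ K, ¬ G.Adj q z := by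
    by_contra! hall
    exact hKn (hG.induce_of_subset_neighborSet hall)
  obtain ⟨w⟩ := hK ⟨a, ha⟩ ⟨z, hz⟩
  obtain ⟨e, -, hx, hy⟩ := w.exists_boundary_dart {u | G.Adj q u} hqa hqz
  exact ⟨e.fst, e.fst.2, e.snd, e.snd.2, e.adj, hx, hy⟩

theorem not_indFree_pathGraph_five {a b c d e : V}
    (hab : G.Adj a b) (hbc : G.Adj b c) (hcd : G.Adj c d) (hde : G.Adj d e)
    (hac : ¬ G.Adj a c) (had : ¬ G.Adj a d) (hae : ¬ G.Adj a e)
    (hbd : ¬ G.Adj b d) (hbe : ¬ G.Adj b e) (hce : ¬ G.Adj c e) :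
    ¬ IndFree (pathGraph 5) G := by
  let f : Fin 5 → V := ![a, b, c, d, e]
  have hf : ∀ i j, G.Adj (f i) (f j) ↔ (pathGraph 5).Adj i j := by
    have := G.adj_comm
    intro i j
    fin_cases i <;> fin_cases j <;> simp_all [f, pathGraph_adj]
  -- No two vertices of `P₅` have the same neighbourhood, which makes `f` injective.
  have htwin : ∀ i j : Fin 5, (∀ k, (pathGraph 5).Adj i k ↔ (pathGraph 5).Adj j k) → i = j := by
    simp only [pathGraph_adj]
    decide
  refine fun h => h.elim ⟨⟨f, fun i j hij => htwin i j fun k => ?_⟩, hf _ _⟩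
  rw [← hf, ← hf, hij]

theorem exists_dist_le_dist {A B : Set V} (hA : A.Nonempty) (hB : B.Nonempty) :
    ∃ u ∈ A, ∃ v ∈ B, ∀ x ∈ A, ∀ y ∈ B, G.dist u v ≤ G.dist x y := by
  obtain ⟨⟨u, v⟩, ⟨hu, hv⟩, hmin⟩ :=
    (measure fun p : V × V => G.dist p.1 p.2).wf.has_min (A ×ˢ B) (hA.prod hB)
  exact ⟨u, hu, v, hv, fun x hx y hy => not_lt.mp (hmin (x, y) ⟨hx, hy⟩)⟩

theorem Walk.le_dist_getVert {u v x : V} (w : G.Walk u v) (hx : w.length ≤ G.dist x v) {i : ℕ}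
    (hi : i ≤ w.length) : i ≤ G.dist x (w.getVert i) := by
  have hdrop : G.dist (w.getVert i) v ≤ w.length - i := by
    simpa [Walk.drop_length] using dist_le (w.drop i)
  have := (w.drop i).reachable.dist_triangle_right x
  omega

end SimpleGraph

section Components

variable {V : Type*} {G : SimpleGraph V} {P K K' : Set V}

theorem IsCompOf.nonempty (hK : IsCompOf G P K) : K.Nonempty :=
  Set.nonempty_coe_sort.mp hK.2.1.nonempty

theorem IsCompOf.subset_of_mem (hK : IsCompOf G P K) (hK' : IsCompOf G P K') {u : V}
    (hu : u ∈ K) (hu' : u ∈ K') : K ⊆ K' := by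
  intro v hv
  by_contra hv'
  obtain ⟨w⟩ := hK.2.1 ⟨u, hu⟩ ⟨v, hv⟩
  obtain ⟨e, -, hx, hy⟩ := w.exists_boundary_dart {x | x.1 ∈ K'} hu' hv'
  exact hy (hK'.2.2 _ hx _ (hK.1 e.snd.2) e.adj)

theorem IsCompOf.eq_of_mem (hK : IsCompOf G P K) (hK' : IsCompOf G P K') {u : V}
    (hu : u ∈ K) (hu' : u ∈ K') : K = K' :=
  (hK.subset_of_mem hK' hu hu').antisymm (hK'.subset_of_mem hK hu' hu)

theorem IsCompOf.not_adj (hK : IsCompOf G P K) (hK' : IsCompOf G P K') (hne : K ≠ K')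
    {x y : V} (hx : x ∈ K) (hy : y ∈ K') : ¬ G.Adj x y :=
  fun h => hne (hK.eq_of_mem hK' (hK.2.2 x hx y (hK'.1 hy) h) hy)

end Components

section ProbeSupergraph

variable {V : Type*} {G G' : SimpleGraph V} {P K K' : Set V} {n : ℕ}

theorem IsCompOf.exists_induced_path_three (hle : G ≤ G')
    (hP : ∀ u ∈ P, ∀ v, G'.Adj u v → G.Adj u v) (hG : G.Colorable (n + 1))
    (hK : IsCompOf G P K) (hKn : ¬ (G.induce K).Colorable n) {q a : V} (ha : a ∈ K)
    (hqa : G'.Adj q a) : ∃ x ∈ K, ∃ y ∈ K, G'.Adj y x ∧ G'.Adj x q ∧ ¬ G'.Adj y q := by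
  obtain ⟨x, hx, y, hy, hxy, hqx, hqy⟩ := exists_adj_adj_not_adj_of_not_colorable hG
    hK.2.1.preconnected hKn ha (hP a (hK.1 ha) q hqa.symm).symm
  exact ⟨x, hx, y, hy, (hle hxy).symm, (hle hqx).symm,
    fun h => hqy (hP y (hK.1 hy) q h).symm⟩

theorem IsCompOf.not_indFree_of_adj_of_adj (hle : G ≤ G')
    (hP : ∀ u ∈ P, ∀ v, G'.Adj u v → G.Adj u v) (hG : G.Colorable (n + 1))
    (hK : IsCompOf G P K) (hK' : IsCompOf G P K') (hne : K ≠ K')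
    (hKn : ¬ (G.induce K).Colorable n) (hKn' : ¬ (G.induce K').Colorable n) {q a a' : V}
    (ha : a ∈ K) (ha' : a' ∈ K') (hqa : G'.Adj q a) (hqa' : G'.Adj q a') :
    ¬ IndFree (pathGraph 5) G' := by
  obtain ⟨x, hx, y, hy, hyx, hxq, hyq⟩ := hK.exists_induced_path_three hle hP hG hKn ha hqa
  obtain ⟨x', hx', y', hy', hyx', hxq', hyq'⟩ :=
    hK'.exists_induced_path_three hle hP hG hKn' ha' hqa'
  have hsep : ∀ s ∈ K, ∀ t ∈ K', ¬ G'.Adj s t :=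
    fun s hs t ht h => hK.not_adj hK' hne hs ht (hP s (hK.1 hs) t h)
  exact not_indFree_pathGraph_five hyx hxq hxq'.symm hyx'.symm hyq (hsep y hy x' hx')
    (hsep y hy y' hy') (hsep x hx x' hx') (hsep x hx y' hy') (fun h => hyq' h.symm)

theorem IsCompOf.not_indFree_of_far (hle : G ≤ G')
    (hP : ∀ u ∈ P, ∀ v, G'.Adj u v → G.Adj u v) (hG : G.Colorable (n + 1))
    (hK : IsCompOf G P K) (hKn : ¬ (G.induce K).Colorable n) {a q r s : V} (ha : a ∈ K)
    (hqa : G'.Adj q a) (hqr : G'.Adj q r) (hrs : G'.Adj r s)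
    (hr : ∀ x ∈ K, 2 ≤ G'.dist x r) (hs : ∀ x ∈ K, 3 ≤ G'.dist x s) :
    ¬ IndFree (pathGraph 5) G' := by
  obtain ⟨x, hx, y, hy, hyx, hxq, hyq⟩ := hK.exists_induced_path_three hle hP hG hKn ha hqa
  have hnonadj : ∀ z ∈ K, ∀ t, 2 ≤ G'.dist z t → ¬ G'.Adj z t := fun z _ t hzt h => by
    rw [dist_eq_one_iff_adj.mpr h] at hzt
    omega
  have hqs : ¬ G'.Adj q s := fun h => by
    simpa using (hs a ha).trans (dist_le (Walk.cons hqa.symm h.toWalk))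
  exact not_indFree_pathGraph_five hyx hxq hqr hrs hyq (hnonadj y hy r (hr y hy))
    (hnonadj y hy s (by linarith [hs y hy])) (hnonadj x hx r (hr x hx))
    (hnonadj x hx s (by linarith [hs x hx])) hqs

end ProbeSupergraph

theorem stmt_4_general {V : Type*} (G : SimpleGraph V) (P N : Set V)
    (hPN : P = Nᶜ)
    (hconn : G.Connected)
    (hprobe : PartProbeFree (pathGraph 5) G N)
    (hcol : G.Colorable 3) :
    ∀ K K' : Set V, IsCompOf G P K → IsCompOf G P K' →
      ¬ (G.induce K).Colorable 2 → ¬ (G.induce K').Colorable 2 → K = K' := by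
  intro K₁ K₂ hK₁ hK₂ hnb₁ hnb₂
  by_contra hne
  obtain ⟨-, G', hle, hnew, hfree⟩ := hprobe
  have hP : ∀ u ∈ P, ∀ v, G'.Adj u v → G.Adj u v := fun u hu v h =>
    by_contra fun hG => (hPN ▸ hu) (hnew u v h hG).1
  have hG' : G'.Connected := hconn.mono hle
  obtain ⟨u, hu, v, hv, hmin⟩ := exists_dist_le_dist (G := G') hK₁.nonempty hK₂.nonempty
  obtain ⟨w, hw⟩ := (hG' u v).exists_walk_length_eq_dist
  have hfar : ∀ x ∈ K₁, ∀ i ≤ w.length, i ≤ G'.dist x (w.getVert i) :=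
    fun x hx i hi => w.le_dist_getVert (hw ▸ hmin x hx v hv) hi
  have hd : 2 ≤ w.length := hw ▸ hG'.one_lt_dist_of_ne_of_not_adj
    (fun h => hne (hK₁.eq_of_mem hK₂ hu (h ▸ hv)))
    (fun h => hK₁.not_adj hK₂ hne hu hv (hP u (hK₁.1 hu) v h))
  have hp₁ : G'.Adj (w.getVert 1) u := by
    simpa using (w.adj_getVert_succ (i := 0) (by omega)).symm
  rcases hd.eq_or_lt with hd | hd
  · have hp₁' : G'.Adj (w.getVert 1) v := by
      simpa [hd, Walk.getVert_length] using w.adj_getVert_succ (i := 1) (by omega)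
    exact hK₁.not_indFree_of_adj_of_adj hle hP hcol hK₂ hne hnb₁ hnb₂ hu hv hp₁ hp₁' hfree
  · exact hK₁.not_indFree_of_far hle hP hcol hnb₁ hu hp₁
      (w.adj_getVert_succ (i := 1) (by omega)) (w.adj_getVert_succ (i := 2) (by omega))
      (fun x hx => hfar x hx 2 (by omega)) (fun x hx => hfar x hx 3 (by omega)) hfree

theorem stmt_4 {V : Type*} [Fintype V] (G : SimpleGraph V) (P N : Set V)
    (hPN : P = Nᶜ)
    (hconn : G.Connected)
    (hprobe : PartProbeFree (pathGraph 5) G N)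
    (hcol : G.Colorable 3) :
    ∀ K K' : Set V, IsCompOf G P K → IsCompOf G P K' →
      ¬ (G.induce K).Colorable 2 → ¬ (G.induce K').Colorable 2 → K = K' :=
  stmt_4_general G P N hPN hconn hprobe hcol
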